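/- Every instance of selfish bin covering admits an M-SNE partition π with p(π) = OPT; that is, the price of stability with respect to M-SNE is 1. -/

import Mathlib

open Finset

/-- Total size of the items in a bin. -/
def binSize {n : ℕ} (a : Fin n → ℕ) (B : Finset (Fin n)) : ℕ := ∑ j ∈ B, a j

/-- The social welfare of a partition: the number of covered bins. -/
def welfare {n : ℕ} (a : Fin n → ℕ) (b : ℕ)
    (π : Finpartition (univ : Finset (Fin n))) : ℕ :=
  (π.parts.filter fun B => b ≤ binSize a B).card

/-- The payoff of item `j` when it lies in bin `B`. -/
def payoffIn {n : ℕ} (a : Fin n → ℕ) (b : ℕ) (j : Fin n) (B : Finset (Fin n)) : ℚ :=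
  if b ≤ binSize a B then (a j : ℚ) / (binSize a B : ℚ) else 0

/-- Nash equilibrium. -/
def IsNE {n : ℕ} (a : Fin n → ℕ) (b : ℕ)
    (π : Finpartition (univ : Finset (Fin n))) : Prop :=
  (∀ j : Fin n, ∀ B ∈ π.parts, j ∉ B →
      payoffIn a b j (insert j B) ≤ payoffIn a b j (π.part j)) ∧
  ∀ j : Fin n, payoffIn a b j {j} ≤ payoffIn a b j (π.part j)

/-- A partition is reasonable if at most one bin is uncovered. -/
def Reasonable {n : ℕ} (a : Fin n → ℕ) (b : ℕ)
    (π : Finpartition (univ : Finset (Fin n))) : Prop :=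
  (π.parts.filter fun B => binSize a B < b).card ≤ 1

/-- A bin is minimal covered if it is covered and removing any member uncovers it. -/
def MinimalCovered {n : ℕ} (a : Fin n → ℕ) (b : ℕ) (B : Finset (Fin n)) : Prop :=
  b ≤ binSize a B ∧ ∀ j ∈ B, binSize a (B.erase j) < b

/-- A partition is rational if it is reasonable and every covered bin is minimal covered. -/
def RationalPartition {n : ℕ} (a : Fin n → ℕ) (b : ℕ)
    (π : Finpartition (univ : Finset (Fin n))) : Prop :=
  Reasonable a b π ∧ ∀ B ∈ π.parts, b ≤ binSize a B → MinimalCovered a b B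

/-- `B_m(π)`: the unique uncovered bin of a (rational) partition if one exists, `∅` otherwise. -/
def uncoveredBin {n : ℕ} (a : Fin n → ℕ) (b : ℕ)
    (π : Finpartition (univ : Finset (Fin n))) : Finset (Fin n) :=
  (π.parts.filter fun B => binSize a B < b).sup id

/-- `δ(B) = s(B)` if `B` is covered, `+∞` otherwise. -/
def delta {n : ℕ} (a : Fin n → ℕ) (b : ℕ) (B : Finset (Fin n)) : ℕ∞ :=
  if b ≤ binSize a B then (binSize a B : ℕ∞) else ⊤

/-- Fireable Nash equilibrium of type (I). -/
def IsFNE1 {n : ℕ} (a : Fin n → ℕ) (b : ℕ)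
    (π : Finpartition (univ : Finset (Fin n))) : Prop :=
  RationalPartition a b π ∧
  ¬ ∃ j : Fin n, b ≤ binSize a (π.part j) ∧
      MinimalCovered a b (insert j (uncoveredBin a b π)) ∧
      binSize a (uncoveredBin a b π) + a j < binSize a (π.part j)

/-- Fireable Nash equilibrium of type (II). -/
def IsFNE2 {n : ℕ} (a : Fin n → ℕ) (b : ℕ)
    (π : Finpartition (univ : Finset (Fin n))) : Prop :=
  RationalPartition a b π ∧
  ¬ ∃ (j : Fin n) (E : Finset (Fin n)), b ≤ binSize a (π.part j) ∧
      E ⊆ uncoveredBin a b π ∧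
      MinimalCovered a b (insert j (uncoveredBin a b π \ E)) ∧
      binSize a (uncoveredBin a b π \ E) + a j < binSize a (π.part j)

/-- Fireable Nash equilibrium of type (III). -/
def IsFNE3 {n : ℕ} (a : Fin n → ℕ) (b : ℕ)
    (π : Finpartition (univ : Finset (Fin n))) : Prop :=
  RationalPartition a b π ∧
  ¬ ∃ (j : Fin n) (Bi E : Finset (Fin n)), Bi ∈ π.parts ∧ j ∉ Bi ∧ E ⊆ Bi ∧
      MinimalCovered a b (insert j (Bi \ E)) ∧
      ((binSize a (Bi \ E) + a j : ℕ) : ℕ∞) < min (delta a b Bi) (delta a b (π.part j))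

/-- Modified strong Nash equilibrium. -/
def IsMSNE {n : ℕ} (a : Fin n → ℕ) (b : ℕ)
    (π : Finpartition (univ : Finset (Fin n))) : Prop :=
  RationalPartition a b π ∧
  ¬ ∃ (Bi E : Finset (Fin n)), Bi ∈ π.parts ∧ b ≤ binSize a Bi ∧ E ⊆ Bi ∧
      binSize a (uncoveredBin a b π) < binSize a (Bi \ E) ∧
      MinimalCovered a b (uncoveredBin a b π ∪ E)

/-- Strong Nash equilibrium. -/
def IsSNE {n : ℕ} (a : Fin n → ℕ) (b : ℕ)
    (π : Finpartition (univ : Finset (Fin n))) : Prop :=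
  ¬ ∃ B : Finset (Fin n), b ≤ binSize a B ∧
      ∀ j ∈ B, binSize a (π.part j) < b ∨ binSize a B < binSize a (π.part j)

/-- `F` is a minimum subset w.r.t. `(E, b)`. -/
def IsMinSubset {n : ℕ} (a : Fin n → ℕ) (b : ℕ) (F E : Finset (Fin n)) : Prop :=
  F ⊆ E ∧ b ≤ binSize a F ∧ ∀ G ⊆ E, b ≤ binSize a G → binSize a F ≤ binSize a G

/-!
Take a partition maximising, in lexicographic order, the number of covered bins, then minus the
total size of the covered bins, then minus the number of uncovered bins; this rank is a sum of
per-bin values, so a local move changes it by the values of the bins it creates minus those of the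
bins it destroys. Such a partition is optimal, and each way of failing to be an M-SNE yields an
improving move: merging all uncovered bins, splitting a superfluous item off a covered bin, or
performing the M-SNE deviation itself, which either covers one more bin or replaces the covered
bin `B_i` by the strictly smaller covered bin `B_m ∪ E`.
-/

namespace Finpartition

variable {α : Type*} [DecidableEq α] {s : Finset α} (π : Finpartition s)
  {P Q : Finset (Finset α)}

lemma disjoint_sup_of_mem_sdiff (hP : P ⊆ π.parts) {B : Finset α} (hB : B ∈ π.parts \ P) :
    Disjoint B (P.sup id) := by
  rw [mem_sdiff] at hB
  exact Finset.disjoint_sup_right.2 fun C hC ↦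
    π.disjoint hB.1 (hP hC) (ne_of_mem_of_not_mem hC hB.2).symm

def replaceParts (hP : P ⊆ π.parts) (hQP : Q.sup id = P.sup id)
    (hQ : (Q : Set (Finset α)).PairwiseDisjoint id) (hQ₀ : ∅ ∉ Q) : Finpartition s where
  parts := π.parts \ P ∪ Q
  supIndep := by
    rw [supIndep_iff_pairwiseDisjoint, coe_union]
    refine (π.disjoint.subset sdiff_subset).union hQ fun B hB C hC _ ↦ ?_
    exact (π.disjoint_sup_of_mem_sdiff hP hB).mono_right (hQP ▸ le_sup (f := id) hC)
  sup_parts := by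
    rw [sup_union, hQP, ← sup_union, sdiff_union_of_subset hP, π.sup_parts]
  bot_notMem := by
    rw [mem_union, not_or]
    exact ⟨fun h ↦ π.bot_notMem (mem_sdiff.1 h).1, hQ₀⟩

lemma disjoint_sdiff_of_sup_eq (hP : P ⊆ π.parts) (hQP : Q.sup id = P.sup id) (hQ₀ : ∅ ∉ Q) :
    Disjoint (π.parts \ P) Q := by
  refine disjoint_right.2 fun B hBQ hB ↦ hQ₀ ?_
  have hBP : B ≤ P.sup id := hQP ▸ le_sup (f := id) hBQ
  rwa [(π.disjoint_sup_of_mem_sdiff hP hB).eq_bot_of_le hBP] at hBQ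

lemma sum_replaceParts_add {M : Type*} [AddCommMonoid M] (hP : P ⊆ π.parts)
    (hQP : Q.sup id = P.sup id) (hQ : (Q : Set (Finset α)).PairwiseDisjoint id) (hQ₀ : ∅ ∉ Q)
    (f : Finset α → M) :
    ∑ B ∈ (π.replaceParts hP hQP hQ hQ₀).parts, f B + ∑ B ∈ P, f B
      = ∑ B ∈ π.parts, f B + ∑ B ∈ Q, f B := by
  rw [replaceParts, sum_union (π.disjoint_sdiff_of_sup_eq hP hQP hQ₀), add_right_comm,
    sum_sdiff hP]

end Finpartition

section SelfishBinCovering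

variable {n : ℕ} (a : Fin n → ℕ) (b : ℕ)

def binValue (B : Finset (Fin n)) : ℤ ×ₗ ℤ ×ₗ ℤ :=
  if b ≤ binSize a B then toLex (1, toLex (-(binSize a B : ℤ), 0)) else toLex (0, toLex (0, -1))

def potential (π : Finpartition (univ : Finset (Fin n))) : ℤ ×ₗ ℤ ×ₗ ℤ :=
  ∑ B ∈ π.parts, binValue a b B

variable {a b}

lemma nonempty_of_le_binSize (hb : 0 < b) {B : Finset (Fin n)} (h : b ≤ binSize a B) :
    B.Nonempty :=
  nonempty_of_sum_ne_zero (f := a) (by rw [binSize] at h; omega)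

lemma binValue_of_le {B : Finset (Fin n)} (h : b ≤ binSize a B) :
    binValue a b B = toLex (1, toLex (-(binSize a B : ℤ), 0)) :=
  if_pos h

lemma binValue_of_lt {B : Finset (Fin n)} (h : binSize a B < b) :
    binValue a b B = toLex (0, toLex (0, -1)) :=
  if_neg h.not_ge

lemma sum_binValue_of_forall_lt {S : Finset (Finset (Fin n))} (h : ∀ B ∈ S, binSize a B < b) :
    ∑ B ∈ S, binValue a b B = toLex (0, toLex (0, -(#S : ℤ))) := by
  induction S using Finset.cons_induction with
  | empty => rfl
  | cons B S _ ih =>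
    rw [sum_cons, ih fun C hC ↦ h C (mem_cons_of_mem hC), binValue_of_lt (h B (mem_cons_self B S)),
      card_cons, ← toLex_add]
    simp only [Prod.mk_add_mk, ← toLex_add]
    push_cast
    ring_nf

lemma sum_binValue_lt_binValue {S : Finset (Finset (Fin n))} (hS : ∀ C ∈ S, binSize a C < b)
    (hS₁ : 1 < #S) (X : Finset (Fin n)) : ∑ C ∈ S, binValue a b C < binValue a b X := by
  rw [sum_binValue_of_forall_lt hS]
  unfold binValue
  split_ifs <;> simp [Prod.Lex.toLex_lt_toLex, hS₁]

lemma binValue_add_sum_lt_binValue_add {B X : Finset (Fin n)} (hB : b ≤ binSize a B)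
    (hX : b ≤ binSize a X) (hXB : binSize a X < binSize a B) {S : Finset (Finset (Fin n))}
    (hS : ∀ C ∈ S, binSize a C < b) (Y : Finset (Fin n)) :
    binValue a b B + ∑ C ∈ S, binValue a b C < binValue a b X + binValue a b Y := by
  rw [sum_binValue_of_forall_lt hS, binValue_of_le hB, binValue_of_le hX]
  unfold binValue
  split_ifs <;> simp [← toLex_add, Prod.Lex.toLex_lt_toLex, hXB]

lemma welfare_eq_fst_potential (π : Finpartition (univ : Finset (Fin n))) :
    (welfare a b π : ℤ) = (ofLex (potential a b π)).1 := by
  rw [potential, ← coe_ofLexAddEquiv, map_sum, Prod.fst_sum, welfare, card_filter]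
  push_cast
  refine sum_congr rfl fun B _ ↦ ?_
  unfold binValue
  split_ifs <;> rfl

lemma welfare_le_of_potential_le {π σ : Finpartition (univ : Finset (Fin n))}
    (h : potential a b σ ≤ potential a b π) : welfare a b σ ≤ welfare a b π := by
  have hfst := Prod.Lex.monotone_fst _ _ h
  rwa [← welfare_eq_fst_potential, ← welfare_eq_fst_potential, Nat.cast_le] at hfst

lemma potential_lt_replaceParts (π : Finpartition (univ : Finset (Fin n)))
    {P Q : Finset (Finset (Fin n))} (hP : P ⊆ π.parts) (hQP : Q.sup id = P.sup id)
    (hQ : (Q : Set (Finset (Fin n))).PairwiseDisjoint id) (hQ₀ : ∅ ∉ Q)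
    (h : ∑ B ∈ P, binValue a b B < ∑ B ∈ Q, binValue a b B) :
    potential a b π < potential a b (π.replaceParts hP hQP hQ hQ₀) := by
  have := π.sum_replaceParts_add hP hQP hQ hQ₀ (binValue a b)
  rw [← potential, ← potential] at this
  refine lt_of_add_lt_add_right (a := ∑ B ∈ P, binValue a b B) ?_
  calc potential a b π + ∑ B ∈ P, binValue a b B
      < potential a b π + ∑ B ∈ Q, binValue a b B := add_lt_add_right h _
    _ = _ := this.symm

lemma exists_potential_gt_of_split {π : Finpartition (univ : Finset (Fin n))}
    {P : Finset (Finset (Fin n))} (hP : P ⊆ π.parts) {X Y : Finset (Fin n)}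
    (hXY : X ∪ Y = P.sup id) (hdisj : Disjoint X Y) (hX : X.Nonempty) (hY : Y.Nonempty)
    (h : ∑ B ∈ P, binValue a b B < binValue a b X + binValue a b Y) :
    ∃ σ, potential a b π < potential a b σ := by
  have hne : X ≠ Y := fun h ↦ hX.ne_empty (disjoint_self.1 (h ▸ hdisj))
  have hQ : (({X, Y} : Finset (Finset (Fin n))) : Set (Finset (Fin n))).PairwiseDisjoint id := by
    rw [coe_pair]
    exact (Set.pairwiseDisjoint_singleton _ _).insert fun Z hZ _ ↦
      (Set.mem_singleton_iff.1 hZ) ▸ hdisj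
  have hQ₀ : ∅ ∉ ({X, Y} : Finset (Finset (Fin n))) := by
    simp [eq_comm, hX.ne_empty, hY.ne_empty]
  exact ⟨_, potential_lt_replaceParts π hP (by simpa using hXY) hQ hQ₀ (by rwa [sum_pair hne])⟩

lemma reasonable_of_forall_potential_le {π : Finpartition (univ : Finset (Fin n))}
    (hπ : ∀ σ, potential a b σ ≤ potential a b π) : Reasonable a b π := by
  unfold Reasonable
  by_contra! h
  set Unc := π.parts.filter fun C ↦ binSize a C < b
  obtain ⟨U, hU⟩ := card_pos.1 (one_pos.trans h)
  have hQ₀ : ∅ ∉ ({Unc.sup id} : Finset (Finset (Fin n))) := fun h₀ ↦ by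
    have hUsup : U ⊆ Unc.sup id := le_sup (f := id) hU
    rw [← mem_singleton.1 h₀, subset_empty] at hUsup
    exact (π.nonempty_of_mem_parts (mem_filter.1 hU).1).ne_empty hUsup
  refine (hπ _).not_gt
    (potential_lt_replaceParts π (filter_subset _ _) sup_singleton (by simp) hQ₀ ?_)
  rw [sum_singleton]
  exact sum_binValue_lt_binValue (fun C hC ↦ (mem_filter.1 hC).2) h _

lemma minimalCovered_of_forall_potential_le (ha : ∀ j, 0 < a j) (hb : 0 < b)
    {π : Finpartition (univ : Finset (Fin n))} (hπ : ∀ σ, potential a b σ ≤ potential a b π)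
    {B : Finset (Fin n)} (hB : B ∈ π.parts) (hcov : b ≤ binSize a B) : MinimalCovered a b B := by
  refine ⟨hcov, fun j hj ↦ ?_⟩
  by_contra! hjcov
  have hsize : binSize a (B.erase j) < binSize a B := by
    have := sum_erase_add B a hj
    have := ha j
    rw [binSize, binSize]
    omega
  have hgain := binValue_add_sum_lt_binValue_add hcov hjcov hsize (S := ∅) (by simp) {j}
  rw [sum_empty, add_zero] at hgain
  obtain ⟨σ, hσ⟩ := exists_potential_gt_of_split (singleton_subset_iff.2 hB)
    (by simp [insert_erase hj]) (disjoint_singleton_right.2 (notMem_erase j B))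
    (nonempty_of_le_binSize hb hjcov) (singleton_nonempty j)
    (by rwa [sum_singleton])
  exact (hπ σ).not_gt hσ

lemma isMSNE_of_forall_potential_le (ha : ∀ j, 0 < a j) (hb : 0 < b)
    {π : Finpartition (univ : Finset (Fin n))} (hπ : ∀ σ, potential a b σ ≤ potential a b π) :
    IsMSNE a b π := by
  refine ⟨⟨reasonable_of_forall_potential_le hπ,
    fun B hB ↦ minimalCovered_of_forall_potential_le ha hb hπ hB⟩, ?_⟩
  rintro ⟨B, E, hB, hBcov, hEB, hlt, hUE⟩
  set U := uncoveredBin a b π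
  set Unc := π.parts.filter fun C ↦ binSize a C < b
  have hBUnc : B ∉ Unc := fun h ↦ (mem_filter.1 h).2.not_ge hBcov
  have hUB : Disjoint U B := Finset.disjoint_sup_left.2 fun C hC ↦
    π.disjoint (mem_filter.1 hC).1 hB (ne_of_mem_of_not_mem hC hBUnc)
  have hsize : binSize a (U ∪ E) < binSize a B := by
    have hsplit : binSize a (B \ E) + binSize a E = binSize a B := sum_sdiff hEB
    have hunion : binSize a (U ∪ E) = binSize a U + binSize a E :=
      sum_union (hUB.mono_right hEB)
    omega
  obtain ⟨σ, hσ⟩ := exists_potential_gt_of_split (P := insert B Unc)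
    (insert_subset hB (filter_subset _ _)) (X := U ∪ E) (Y := B \ E)
    (by rw [sup_insert, union_assoc, union_sdiff_of_subset hEB, union_comm]; rfl)
    (disjoint_union_left.2 ⟨hUB.mono_right sdiff_subset, disjoint_sdiff⟩)
    (nonempty_of_le_binSize hb hUE.1)
    (nonempty_of_sum_ne_zero (f := a) (show binSize a (B \ E) ≠ 0 by omega))
    (by
      rw [sum_insert hBUnc]
      exact binValue_add_sum_lt_binValue_add hBcov hUE.1 hsize (fun C hC ↦ (mem_filter.1 hC).2) _)
  exact (hπ σ).not_gt hσ

end SelfishBinCovering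

/-- every instance admits an M-SNE whose welfare equals `OPT`
(price of stability w.r.t. M-SNE is 1). -/
theorem stmt17 (n : ℕ) (hn : 1 ≤ n) (a : Fin n → ℕ) (b : ℕ)
    (ha : ∀ j, 0 < a j) (hab : ∀ j, a j < b) :
    ∃ π : Finpartition (univ : Finset (Fin n)),
      IsMSNE a b π ∧ ∀ σ : Finpartition (univ : Finset (Fin n)),
        welfare a b σ ≤ welfare a b π := by
  have hb : 0 < b := (Nat.zero_le _).trans_lt (hab ⟨0, hn⟩)
  obtain ⟨π, hπ⟩ := Finite.exists_max (potential a b)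
  exact ⟨π, isMSNE_of_forall_potential_le ha hb hπ, fun σ ↦ welfare_le_of_potential_le (hπ σ)⟩
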